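/- arXiv:2502.16997 — 2 statements merged into one kernel-verified Lean document; each statement's English description precedes it below -/
import Mathlib

section
/- For every integral connectivity structure 𝒦 on a finite nonempty set I, there exists a random family φ on I (a finite probability space together with finitely valued random variables indexed by I) whose connectivity structure equals 𝒦: K_φ = 𝒦. Explicitly, if 𝒦 is discrete one may take the family of constant variables on a one-point space, and otherwise the tensor product ⨂_{K ∈ 𝒦̃} β_K of the canonical K-brunnian families over the irreducible connected sets K of 𝒦 of cardinality ≥ 2 works. -/
universe u

variable {I : Type u}

/-- `{J₁, J₂}` is a dissociation of `J ⊆ I`: an (unordered) pair of nonempty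
disjoint subsets whose union is `J`. -/
def IsDissociation (J J1 J2 : Set I) : Prop :=
  J1.Nonempty ∧ J2.Nonempty ∧ Disjoint J1 J2 ∧ J1 ∪ J2 = J

/-- `A` contests the dissociation `{J₁, J₂}`. -/
def Contests (A J1 J2 : Set I) : Prop :=
  A ⊆ J1 ∪ J2 ∧ (A ∩ J1).Nonempty ∧ (A ∩ J2).Nonempty

/-- An integral connectivity structure on `I`. -/
def IsConnectivity (𝒦 : Set (Set I)) : Prop :=
  ∅ ∈ 𝒦 ∧ (∀ i : I, ({i} : Set I) ∈ 𝒦) ∧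
    ∀ K L : Set I, K ∈ 𝒦 → L ∈ 𝒦 → (K ∩ L).Nonempty → K ∪ L ∈ 𝒦

/-- The integral connectivity structure generated by `𝒜`. -/
def generated (𝒜 : Set (Set I)) : Set (Set I) :=
  ⋂₀ {𝒦 : Set (Set I) | IsConnectivity 𝒦 ∧ 𝒜 ⊆ 𝒦}

/-- The set `𝒦̃` of irreducible members of `𝒦` with at least two elements. -/
def irred (𝒦 : Set (Set I)) : Set (Set I) :=
  {K | K ∈ 𝒦 ∧ K ∉ generated (𝒦 \ {K}) ∧ 2 ≤ K.ncard}

/-- The sum of two integral connectivity structures: `𝒦₁ ⊕ 𝒦₂ = [𝒦₁ ∪ 𝒦₂]`. -/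
def csum (𝒦₁ 𝒦₂ : Set (Set I)) : Set (Set I) := generated (𝒦₁ ∪ 𝒦₂)

/-- The discrete integral connectivity structure on `I`. -/
def discreteStructure (I : Type u) : Set (Set I) :=
  {(∅ : Set I)} ∪ {A : Set I | ∃ i : I, A = {i}}

/-- `C` is a connected component of `(I, 𝒦)`: a maximal member of `𝒦`. -/
def IsComponent (𝒦 : Set (Set I)) (C : Set I) : Prop :=
  C ∈ 𝒦 ∧ ∀ K ∈ 𝒦, C ⊆ K → K = C

/-- `Γ_𝒜`: subsets of `I` all of whose dissociations are contested by a member of `𝒜`. -/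
def Gamma (𝒜 : Set (Set I)) : Set (Set I) :=
  {B | ∀ J1 J2 : Set I, IsDissociation B J1 J2 → ∃ A ∈ 𝒜, Contests A J1 J2}

/-- A random family on `I`: a finite probability space together with finitely
valued random variables indexed by `I`. -/
structure RandomFamily (I : Type u) where
  Ω : Type
  [fintΩ : Fintype Ω]
  P : Ω → ℝ
  P_nonneg : ∀ ω, 0 ≤ P ω
  P_total : ∑ ω, P ω = 1
  R : I → Type
  [fintR : ∀ i, Fintype (R i)]
  X : ∀ i, Ω → R i

attribute [instance] RandomFamily.fintΩ RandomFamily.fintR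

/-- Probability of an event. -/
noncomputable def RandomFamily.prob (φ : RandomFamily I) (E : Set φ.Ω) : ℝ :=
  ∑ ω, E.indicator φ.P ω

/-- `P(X_J = x_J)`. -/
noncomputable def RandomFamily.probEq (φ : RandomFamily I) (J : Set I)
    (x : ∀ i, φ.R i) : ℝ :=
  φ.prob {ω | ∀ j ∈ J, φ.X j ω = x j}

/-- `φ` respects the dissociation `{J₁, J₂}`:
`P(X_{J₁∪J₂} = x) = P(X_{J₁} = x) · P(X_{J₂} = x)` for all tuples of values. -/
def RandomFamily.Respects (φ : RandomFamily I) (J1 J2 : Set I) : Prop :=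
  ∀ x : ∀ i, φ.R i, φ.probEq (J1 ∪ J2) x = φ.probEq J1 x * φ.probEq J2 x

/-- The connectivity structure `K_φ` of a random family: the subsets `J ⊆ I`
such that `φ` contests every dissociation of `J`. -/
def RandomFamily.Kconn (φ : RandomFamily I) : Set (Set I) :=
  {J | ∀ J1 J2 : Set I, IsDissociation J J1 J2 → ¬ φ.Respects J1 J2}

/-- Tensor product of two random families. -/
noncomputable def RandomFamily.tensor (φ ψ : RandomFamily I) : RandomFamily I where
  Ω := φ.Ω × ψ.Ω
  fintΩ := inferInstance
  P := fun p => φ.P p.1 * ψ.P p.2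
  P_nonneg := fun p => mul_nonneg (φ.P_nonneg _) (ψ.P_nonneg _)
  P_total := by
    rw [Fintype.sum_prod_type]
    simp only [← Finset.mul_sum]
    rw [ψ.P_total]
    simp only [mul_one]
    exact φ.P_total
  R := fun i => φ.R i × ψ.R i
  fintR := fun i => inferInstance
  X := fun i p => (φ.X i p.1, ψ.X i p.2)

/-- Restriction of a random family to a subset `J ⊆ I`. -/
def RandomFamily.restrict (φ : RandomFamily I) (J : Set I) : RandomFamily J where
  Ω := φ.Ω
  fintΩ := inferInstance
  P := φ.P
  P_nonneg := φ.P_nonneg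
  P_total := φ.P_total
  R := fun j => φ.R (j : I)
  fintR := fun j => inferInstance
  X := fun j => φ.X (j : I)

/-- The canonical `M`-brunnian family on `I`, for `M` of cardinality `m`
(with elements listed in increasing order). -/
noncomputable def brunnian [LinearOrder I] (M : Finset I) (m : ℕ) (h : M.card = m) :
    RandomFamily I where
  Ω := Fin (m - 1) → ZMod 2
  fintΩ := inferInstance
  P := fun _ => ((2 : ℝ) ^ (m - 1))⁻¹
  P_nonneg := fun _ => by positivity
  P_total := by
    have hcard : Fintype.card (Fin (m - 1) → ZMod 2) = 2 ^ (m - 1) := by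
      rw [Fintype.card_fun]
      simp
    rw [Finset.sum_const, Finset.card_univ, hcard, nsmul_eq_mul]
    push_cast
    exact mul_inv_cancel₀ (by positivity)
  R := fun _ => ZMod 2
  fintR := fun _ => inferInstance
  X := fun i ω =>
    if hi : i ∈ M then
      if hk : (((M.orderIsoOfFin h).symm ⟨i, hi⟩ : Fin m) : ℕ) < m - 1 then
        ω ⟨_, hk⟩
      else ∑ j, ω j
    else 0

/-!
For `K ⊆ I` let `f` be uniform on the vectors of `(ZMod 2)^I` supported on `K` with zero
coordinate sum. Forgetting one coordinate `k ∈ K` leaves independent fair bits on `K \ {k}`,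
so `f` respects every dissociation `{J₁, J₂}` that misses a point of `K` or one of whose
parts misses `K`; if `K ⊆ J₁ ∪ J₂` meets both parts, the parity constraint ties the values
on `J₁` to those on `J₂`. So `f` contests exactly the dissociations that `K` contests. A
tensor product contests a dissociation iff one of its factors does, hence the product of these
families over all `K ∈ 𝒦` has connectivity structure `Γ_𝒦`. Finally `Γ_𝒦 = 𝒦`: if
`B ∈ Γ_𝒦`, a maximal nonempty `C ∈ 𝒦` inside `B` is `B` itself, since otherwise a member of
`𝒦` contesting `{C, B \ C}` could be glued to `C`.
-/

namespace RandomFamily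

variable {J J1 J2 : Set I}

theorem Respects.symm {φ : RandomFamily I} (h : φ.Respects J1 J2) : φ.Respects J2 J1 := by
  intro x
  rw [Set.union_comm, h x, mul_comm]

variable (φ ψ : RandomFamily I)

theorem probEq_pos_of_mem {ω : φ.Ω} (hω : 0 < φ.P ω) {x : ∀ i, φ.R i}
    (hx : ∀ j ∈ J, φ.X j ω = x j) : 0 < φ.probEq J x := by
  refine hω.trans_le ?_
  have := Finset.single_le_sum (fun ω _ => Set.indicator_nonneg (fun ω _ => φ.P_nonneg ω) ω)
    (Finset.mem_univ ω) (f := {ω | ∀ j ∈ J, φ.X j ω = x j}.indicator φ.P)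
  rwa [Set.indicator_of_mem (s := {ω | ∀ j ∈ J, φ.X j ω = x j}) hx] at this

theorem exists_forall_probEq_pos : ∃ x : ∀ i, φ.R i, ∀ J, 0 < φ.probEq J x := by
  obtain ⟨ω, hω⟩ : ∃ ω, 0 < φ.P ω := by
    by_contra! h
    have := Finset.sum_nonpos fun ω (_ : ω ∈ Finset.univ) => h ω
    linarith [φ.P_total]
  exact ⟨fun i => φ.X i ω, fun J => φ.probEq_pos_of_mem hω fun _ _ => rfl⟩

theorem probEq_tensor (J : Set I) (x : ∀ i, (φ.tensor ψ).R i) :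
    (φ.tensor ψ).probEq J x
      = φ.probEq J (fun i => (x i).1) * ψ.probEq J (fun i => (x i).2) := by
  classical
  simp only [probEq, prob, Finset.sum_mul_sum]
  rw [← Fintype.sum_prod_type']
  refine Finset.sum_congr rfl fun p _ => ?_
  have hmem : (∀ j ∈ J, (φ.tensor ψ).X j p = x j) ↔
      (∀ j ∈ J, φ.X j p.1 = (x j).1) ∧ ∀ j ∈ J, ψ.X j p.2 = (x j).2 :=
    ⟨fun h => ⟨fun j hj => congrArg Prod.fst (h j hj), fun j hj => congrArg Prod.snd (h j hj)⟩,
      fun h j hj => Prod.ext (h.1 j hj) (h.2 j hj)⟩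
  simp only [Set.indicator_apply, Set.mem_ofPred_eq, hmem]
  split_ifs <;> simp_all [tensor]

variable {φ ψ}

theorem Respects.tensor (hφ : φ.Respects J1 J2) (hψ : ψ.Respects J1 J2) :
    (φ.tensor ψ).Respects J1 J2 := fun x => by
  rw [probEq_tensor, probEq_tensor, probEq_tensor, hφ, hψ]
  ring

def IsDependenceWitness (φ : RandomFamily I) (J1 J2 : Set I) (x : ∀ i, φ.R i) : Prop :=
  φ.probEq (J1 ∪ J2) x = 0 ∧ 0 < φ.probEq J1 x ∧ 0 < φ.probEq J2 x

theorem IsDependenceWitness.not_respects {x : ∀ i, φ.R i}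
    (hx : φ.IsDependenceWitness J1 J2 x) : ¬ φ.Respects J1 J2 := fun h =>
  (mul_pos hx.2.1 hx.2.2).ne' (by rw [← h x, hx.1])

theorem IsDependenceWitness.tensor_left {x : ∀ i, φ.R i}
    (hx : φ.IsDependenceWitness J1 J2 x) : ∃ z, (φ.tensor ψ).IsDependenceWitness J1 J2 z := by
  obtain ⟨y, hy⟩ := ψ.exists_forall_probEq_pos
  refine ⟨fun i => (x i, y i), ?_, ?_, ?_⟩ <;> erw [probEq_tensor]
  exacts [by rw [hx.1, zero_mul], mul_pos hx.2.1 (hy _), mul_pos hx.2.2 (hy _)]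

theorem IsDependenceWitness.tensor_right {y : ∀ i, ψ.R i}
    (hy : ψ.IsDependenceWitness J1 J2 y) : ∃ z, (φ.tensor ψ).IsDependenceWitness J1 J2 z := by
  obtain ⟨x, hx⟩ := φ.exists_forall_probEq_pos
  refine ⟨fun i => (x i, y i), ?_, ?_, ?_⟩ <;> erw [probEq_tensor]
  exacts [by rw [hy.1, mul_zero], mul_pos (hx _) hy.2.1, mul_pos (hx _) hy.2.2]

end RandomFamily

section Uniform

variable {α : Type*} {R : I → Type} {X : ∀ i, α → R i} {J J1 J2 : Set I} {x : ∀ i, R i}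

noncomputable def matchCount (X : ∀ i, α → R i) (J : Set I) (x : ∀ i, R i) : ℕ :=
  Nat.card {a : α // ∀ j ∈ J, X j a = x j}

theorem matchCount_empty : matchCount X ∅ x = Nat.card α :=
  Nat.card_congr (Equiv.subtypeUnivEquiv fun _ _ h => absurd h (Set.notMem_empty _))

theorem matchCount_eq_zero (h : ∀ a, ¬ ∀ j ∈ J, X j a = x j) : matchCount X J x = 0 :=
  have : IsEmpty {a : α // ∀ j ∈ J, X j a = x j} := ⟨fun a => h a.1 a.2⟩
  Nat.card_of_isEmpty

theorem matchCount_pos [Finite α] {a : α} (ha : ∀ j ∈ J, X j a = x j) : 0 < matchCount X J x :=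
  have : Nonempty {a : α // ∀ j ∈ J, X j a = x j} := ⟨⟨a, ha⟩⟩
  Nat.card_pos

variable [Finite α] [Nonempty α] [∀ i, Fintype (R i)]

namespace RandomFamily

variable (X) in
noncomputable abbrev uniform : RandomFamily I where
  Ω := Fin (Nat.card α)
  P := fun _ => (Nat.card α : ℝ)⁻¹
  P_nonneg := fun _ => by positivity
  P_total := by
    rw [Finset.sum_const, Finset.card_univ, Fintype.card_fin, nsmul_eq_mul]
    exact mul_inv_cancel₀ (Nat.cast_ne_zero.2 Nat.card_pos.ne')
  R := R
  X := fun i ω => X i ((Finite.equivFin α).symm ω)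

theorem probEq_uniform :
    (uniform X).probEq J x = matchCount X J x / Nat.card α := by
  classical
  show ∑ ω, Set.indicator {ω | ∀ j ∈ J, X j ((Finite.equivFin α).symm ω) = x j}
    (fun _ => (Nat.card α : ℝ)⁻¹) ω = _
  simp only [Set.indicator_apply, Finset.sum_ite, Finset.sum_const_zero, add_zero,
    Finset.sum_const, nsmul_eq_mul, div_eq_mul_inv]
  congr 2
  rw [← Fintype.card_subtype, ← Nat.card_eq_fintype_card]
  exact Nat.card_congr ((Finite.equivFin α).symm.subtypeEquiv fun _ => Iff.rfl)

theorem uniform_respects_of_card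
    (h : ∀ x, matchCount X (J1 ∪ J2) x * Nat.card α = matchCount X J1 x * matchCount X J2 x) :
    (uniform X).Respects J1 J2 := fun x => by
  have hα : (Nat.card α : ℝ) ≠ 0 := Nat.cast_ne_zero.2 Nat.card_pos.ne'
  rw [probEq_uniform, probEq_uniform, probEq_uniform, div_mul_div_comm,
    div_eq_div_iff hα (mul_ne_zero hα hα), ← mul_assoc]
  exact_mod_cast congrArg (· * Nat.card α) (h x)

theorem uniform_respects_of_const (c : ∀ i, R i) (hc : ∀ a, ∀ j ∈ J1, X j a = c j) :
    (uniform X).Respects J1 J2 := by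
  refine uniform_respects_of_card fun x => ?_
  by_cases hx : ∀ j ∈ J1, x j = c j
  · have hJ1 : matchCount X J1 x = Nat.card α :=
      Nat.card_congr (Equiv.subtypeUnivEquiv fun a j hj => (hc a j hj).trans (hx j hj).symm)
    have hJ12 : matchCount X (J1 ∪ J2) x = matchCount X J2 x :=
      Nat.card_congr <| Equiv.subtypeEquivRight fun a =>
        ⟨fun h j hj => h j (Or.inr hj), fun h j hj =>
          hj.elim (fun hj => (hc a j hj).trans (hx j hj).symm) (h j)⟩
    rw [hJ1, hJ12, mul_comm]
  · obtain ⟨j, hj, hxj⟩ := not_forall₂.1 hx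
    have hJ : ∀ J, j ∈ J → matchCount X J x = 0 := fun J hjJ =>
      matchCount_eq_zero fun a h => hxj ((h j hjJ).symm.trans (hc a j hj))
    rw [hJ _ (Or.inl hj), hJ _ hj, zero_mul, zero_mul]

theorem uniform_isDependenceWitness (h0 : ∀ a, ¬ ∀ j ∈ J1 ∪ J2, X j a = x j)
    {a1 : α} (h1 : ∀ j ∈ J1, X j a1 = x j) {a2 : α} (h2 : ∀ j ∈ J2, X j a2 = x j) :
    (uniform X).IsDependenceWitness J1 J2 x := by
  have hα : (0 : ℝ) < Nat.card α := Nat.cast_pos.2 Nat.card_pos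
  refine ⟨?_, ?_, ?_⟩ <;> rw [probEq_uniform]
  exacts [by rw [matchCount_eq_zero h0, Nat.cast_zero, zero_div],
    div_pos (Nat.cast_pos.2 (matchCount_pos h1)) hα,
    div_pos (Nat.cast_pos.2 (matchCount_pos h2)) hα]

end RandomFamily

end Uniform

section Even

variable [Fintype I] {J J1 J2 K : Set I}

open Function

theorem sum_update_eq_sum_sub_add {M : Type*} [AddCommGroup M] [DecidableEq I] (g : I → M)
    (k : I) (b : M) : ∑ i, update g k b i = ∑ i, g i - g k + b := by
  rw [Finset.sum_update_of_mem (Finset.mem_univ k),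
    Finset.sum_eq_add_sum_sdiff_singleton_of_mem (Finset.mem_univ k) g]
  abel

def evenVectors (K : Set I) : Set (I → ZMod 2) :=
  {f | (∀ i ∉ K, f i = 0) ∧ ∑ i, f i = 0}

instance (K : Set I) : Nonempty (evenVectors K) :=
  ⟨⟨0, fun _ _ => rfl, by simp⟩⟩

open Classical in
noncomputable def evenVectorsEquiv {k : I} (hk : k ∈ K) :
    evenVectors K ≃ {g : I → ZMod 2 // ∀ i, i ∉ K \ {k} → g i = 0} where
  toFun := fun f => ⟨update f.1 k 0, fun i hi => by
    by_cases hik : i = k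
    · rw [hik, update_self]
    · rw [update_of_ne hik, f.2.1 i fun hiK => hi ⟨hiK, hik⟩]⟩
  invFun := fun g => ⟨update g.1 k (∑ i, g.1 i), fun i hi => by
    rw [update_of_ne (ne_of_mem_of_not_mem hk hi).symm, g.2 i fun h => hi h.1], by
    rw [sum_update_eq_sum_sub_add, g.2 k fun h => h.2 rfl, sub_zero,
      CharTwo.add_self_eq_zero]⟩
  left_inv := fun f => Subtype.ext <| by
    simp only [update_idem, sum_update_eq_sum_sub_add, f.2.2, zero_sub, add_zero,
      CharTwo.neg_eq, update_eq_self]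
  right_inv := fun g => Subtype.ext <| by
    simp only [update_idem]
    exact update_eq_self_iff.2 (g.2 k fun h => h.2 rfl).symm

theorem matchCount_pi {β : I → Type} (p : ∀ i, β i → Prop) (J : Set I) (x : ∀ i, β i) :
    matchCount (fun i (g : {g : ∀ i, β i // ∀ i, p i (g i)}) => g.1 i) J x
      = ∏ i, Nat.card {b : β i // p i b ∧ (i ∈ J → b = x i)} := by
  rw [← Nat.card_pi]
  refine Nat.card_congr <| (Equiv.subtypeSubtypeEquivSubtypeInter (fun g => ∀ i, p i (g i))
    (fun g => ∀ j ∈ J, g j = x j)).trans ((Equiv.subtypeEquivRight fun g => ?_).trans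
      Equiv.subtypePiEquivPi)
  exact ⟨fun h i => ⟨h.1 i, (h.2 i ·)⟩, fun h => ⟨fun i => (h i).1, fun i => (h i).2⟩⟩

/-- The coordinates of a uniform point of a product set are independent. -/
theorem matchCount_pi_union_mul {β : I → Type} (p : ∀ i, β i → Prop) (hd : Disjoint J1 J2)
    (x : ∀ i, β i) :
    let X := fun i (g : {g : ∀ i, β i // ∀ i, p i (g i)}) => g.1 i
    matchCount X (J1 ∪ J2) x * matchCount X ∅ x = matchCount X J1 x * matchCount X J2 x := by
  simp only [matchCount_pi, ← Finset.prod_mul_distrib]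
  refine Finset.prod_congr rfl fun i _ => ?_
  by_cases h1 : i ∈ J1
  · simp [h1, hd.notMem_of_mem_left h1, mul_comm]
  · by_cases h2 : i ∈ J2 <;> simp [h1, h2, mul_comm]

theorem matchCount_evenVectors_eq {k : I} (hk : k ∈ K) (hJ : k ∉ J) (x : I → ZMod 2) :
    matchCount (fun i (f : evenVectors K) => f.1 i) J x
      = matchCount (fun i (g : {g : I → ZMod 2 // ∀ i, i ∉ K \ {k} → g i = 0}) => g.1 i)
          J x := by
  classical
  refine Nat.card_congr <| (evenVectorsEquiv hk).subtypeEquiv fun f =>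
    forall₂_congr fun j hj => ?_
  exact Iff.of_eq (congrArg (· = x j) (update_of_ne (ne_of_mem_of_not_mem hj hJ) 0 f.1).symm)

/-- A symmetric model of the canonical brunnian family `β_K`: forgetting any one coordinate of `K`
leaves independent fair bits, the forgotten one being their parity (`evenVectorsEquiv`). -/
noncomputable abbrev evenFamily (K : Set I) : RandomFamily I :=
  RandomFamily.uniform (R := fun _ => ZMod 2) fun i (f : evenVectors K) => f.1 i

theorem evenFamily_respects_of_not_subset (hd : Disjoint J1 J2) (hK : ¬ K ⊆ J1 ∪ J2) :
    (evenFamily K).Respects J1 J2 := by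
  obtain ⟨k, hkK, hk⟩ := Set.not_subset.1 hK
  refine RandomFamily.uniform_respects_of_card fun x => ?_
  rw [← matchCount_empty (X := fun i (f : evenVectors K) => f.1 i) (x := x),
    matchCount_evenVectors_eq hkK hk, matchCount_evenVectors_eq hkK (Set.notMem_empty k),
    matchCount_evenVectors_eq hkK fun h => hk (Or.inl h),
    matchCount_evenVectors_eq hkK fun h => hk (Or.inr h)]
  exact matchCount_pi_union_mul (fun i b => i ∉ K \ {k} → b = 0) hd x

theorem evenFamily_respects_of_not_contests (hd : Disjoint J1 J2) (h : ¬ Contests K J1 J2) :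
    (evenFamily K).Respects J1 J2 := by
  by_cases hK : K ⊆ J1 ∪ J2
  · by_cases h1 : (K ∩ J1).Nonempty
    · have h2 : ¬ (K ∩ J2).Nonempty := fun h2 => h ⟨hK, h1, h2⟩
      exact (RandomFamily.uniform_respects_of_const 0
        fun f j hj => f.2.1 j fun hjK => h2 ⟨j, hjK, hj⟩).symm
    · exact RandomFamily.uniform_respects_of_const 0
        fun f j hj => f.2.1 j fun hjK => h1 ⟨j, hjK, hj⟩
  · exact evenFamily_respects_of_not_subset hd hK

theorem evenFamily_isDependenceWitness (hd : Disjoint J1 J2) (hc : Contests K J1 J2) :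
    ∃ x, (evenFamily K).IsDependenceWitness J1 J2 x := by
  classical
  obtain ⟨hK, ⟨i, hiK, hi⟩, ⟨k, hkK, hk⟩⟩ := hc
  refine ⟨Pi.single i 1, RandomFamily.uniform_isDependenceWitness ?_
    (a1 := ⟨Pi.single i 1 + Pi.single k 1, fun j hj => ?_, ?_⟩) (fun j hj => ?_)
    (a2 := ⟨0, fun _ _ => rfl, by simp⟩) (fun j hj => ?_)⟩
  · -- on `J₁ ∪ J₂ ⊇ K` the values of `Pi.single i 1` pin down a vector of odd parity
    intro f hf
    have hfi : f.1 = Pi.single i 1 := funext fun j => by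
      by_cases hj : j ∈ J1 ∪ J2
      · exact hf j hj
      · have hjK : j ∉ K := fun h => hj (hK h)
        rw [f.2.1 j hjK, Pi.single_eq_of_ne (ne_of_mem_of_not_mem hiK hjK).symm]
    have hsum := f.2.2
    simp [hfi] at hsum
  · have hji : j ≠ i := fun h => hj (h ▸ hiK)
    have hjk : j ≠ k := fun h => hj (h ▸ hkK)
    simp [hji, hjk]
  · simp only [Pi.add_apply, Finset.sum_add_distrib, Finset.sum_pi_single', Finset.mem_univ,
      if_true]
    decide
  · have hjk : j ≠ k := hd.ne_of_mem hj hk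
    simp [hjk]
  · have hji : j ≠ i := (hd.ne_of_mem hi hj).symm
    simp [hji]

end Even

section Product

variable [Fintype I] {J1 J2 : Set I}

noncomputable def evenProduct : List (Set I) → RandomFamily I
  | [] => evenFamily ∅
  | K :: L => (evenFamily K).tensor (evenProduct L)

theorem evenProduct_respects (hd : Disjoint J1 J2) :
    ∀ L : List (Set I), (∀ K ∈ L, ¬ Contests K J1 J2) → (evenProduct L).Respects J1 J2
  | [], _ => evenFamily_respects_of_not_contests hd fun h => h.2.1.ne_empty (Set.empty_inter _)
  | K :: L, h => (evenFamily_respects_of_not_contests hd (h K List.mem_cons_self)).tensor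
      (evenProduct_respects hd L fun K' hK' => h K' (List.mem_cons_of_mem K hK'))

theorem evenProduct_isDependenceWitness (hd : Disjoint J1 J2) {K : Set I}
    (hc : Contests K J1 J2) : ∀ L : List (Set I), K ∈ L →
      ∃ x, (evenProduct L).IsDependenceWitness J1 J2 x
  | K' :: L, hK => by
    rcases List.mem_cons.1 hK with rfl | hK
    · obtain ⟨x, hx⟩ := evenFamily_isDependenceWitness hd hc
      exact hx.tensor_left
    · obtain ⟨x, hx⟩ := evenProduct_isDependenceWitness hd hc L hK
      exact hx.tensor_right

theorem kconn_evenProduct (L : List (Set I)) : (evenProduct L).Kconn = Gamma {K | K ∈ L} := by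
  ext J
  refine forall₃_congr fun J1 J2 hdiss => ⟨fun h => ?_, fun ⟨K, hK, hc⟩ => ?_⟩
  · by_contra! hno
    exact h (evenProduct_respects hdiss.2.2.1 L hno)
  · obtain ⟨x, hx⟩ := evenProduct_isDependenceWitness hdiss.2.2.1 hc L hK
    exact hx.not_respects

end Product

section Gamma

variable [Finite I] {𝒦 : Set (Set I)}

theorem mem_of_mem_gamma (h𝒦 : IsConnectivity 𝒦) {B : Set I} (hB : B ∈ Gamma 𝒦) : B ∈ 𝒦 := by
  rcases B.eq_empty_or_nonempty with rfl | ⟨b, hb⟩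
  · exact h𝒦.1
  obtain ⟨C, hC⟩ := (Set.toFinite {C | C ∈ 𝒦 ∧ C ⊆ B ∧ C.Nonempty}).exists_maximal
    ⟨{b}, h𝒦.2.1 b, Set.singleton_subset_iff.2 hb, Set.singleton_nonempty b⟩
  obtain ⟨hC𝒦, hCB, hCne⟩ := hC.prop
  by_contra hB𝒦
  have hBC : (B \ C).Nonempty :=
    Set.sdiff_nonempty.2 fun h => hB𝒦 (Set.Subset.antisymm hCB h ▸ hC𝒦)
  obtain ⟨A, hA, hAB, ⟨a, haA, haC⟩, ⟨d, hdA, hdBC⟩⟩ :=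
    hB C (B \ C) ⟨hCne, hBC, Set.disjoint_sdiff_right, Set.union_sdiff_cancel hCB⟩
  have hCA : C ∪ A ∈ {C | C ∈ 𝒦 ∧ C ⊆ B ∧ C.Nonempty} :=
    ⟨h𝒦.2.2 C A hC𝒦 hA ⟨a, haC, haA⟩,
      Set.union_subset hCB (hAB.trans (Set.union_sdiff_cancel hCB).subset),
      hCne.mono Set.subset_union_left⟩
  exact hdBC.2 ((hC.eq_of_le hCA Set.subset_union_left).symm ▸ Or.inr hdA)

theorem gamma_eq_self (h𝒦 : IsConnectivity 𝒦) : Gamma 𝒦 = 𝒦 := by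
  refine Set.Subset.antisymm (fun B hB => mem_of_mem_gamma h𝒦 hB) ?_
  rintro _ hK J1 J2 ⟨h1, h2, -, rfl⟩
  exact ⟨J1 ∪ J2, hK, subset_rfl, by rwa [Set.union_inter_cancel_left],
    by rwa [Set.union_inter_cancel_right]⟩

end Gamma

theorem stmt18_general {I : Type u} [Fintype I] (𝒦 : Set (Set I))
    (h𝒦 : IsConnectivity 𝒦) :
    ∃ φ : RandomFamily I, φ.Kconn = 𝒦 := by
  obtain ⟨L, hL⟩ : ∃ L : List (Set I), {K | K ∈ L} = 𝒦 :=
    ⟨(Set.toFinite 𝒦).toFinset.toList, by ext; simp⟩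
  exact ⟨evenProduct L, by rw [kconn_evenProduct, hL, gamma_eq_self h𝒦]⟩

/-- every integral connectivity structure on a finite nonempty set `I`
is the connectivity structure of some random family on `I`. -/
theorem stmt18 {I : Type u} [Fintype I] [Nonempty I] (𝒦 : Set (Set I))
    (h𝒦 : IsConnectivity 𝒦) :
    ∃ φ : RandomFamily I, φ.Kconn = 𝒦 :=
  stmt18_general 𝒦 h𝒦
end

section
/- For every integral connectivity structure 𝒦 on a finite nonempty set I, there exist infinitely many pairwise distinct random families φ on I such that K_φ = 𝒦. -/
universe u

variable {I : Type u}

/-!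
For `K ⊆ I` take uniformly random bits `X_k`, `k ∈ K`, conditioned to sum to zero (realised by
correcting one coordinate `k₀ ∈ K`), and `X_i = 0` off `K`. The law does not depend on `k₀`, so
whenever `J` misses a point of `K` the bits `X_J` are independent, whereas `X_K` is not.
Tensoring these families over all `K ∈ 𝒦` gives `φ` with `K_φ = 𝒦`. A dissociation of `J ∈ 𝒦`
is contested by the factor for `J` itself. If `J ∉ 𝒦`, a maximal `M ∈ 𝒦` inside `J` yields the
dissociation `{M, J \ M}`, which no member of `𝒦` contests because `𝒦` is closed under
overlapping unions; so every factor respects it. Finally, splitting each atom of the sample space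
into `n + 1` equal atoms keeps the law and gives infinitely many families.
-/

open Finset

lemma IsConnectivity.gamma_subset [Finite I] {𝒦 : Set (Set I)} (h𝒦 : IsConnectivity 𝒦) :
    Gamma 𝒦 ⊆ 𝒦 := by
  intro J hJ
  by_contra hJ𝒦
  obtain ⟨i, hi⟩ : J.Nonempty := Set.nonempty_iff_ne_empty.2 fun h => hJ𝒦 (h ▸ h𝒦.1)
  obtain ⟨M, ⟨hM𝒦, hMJ, hMne⟩, hmax⟩ := Set.Finite.exists_maximal (Set.toFinite
    {M | M ∈ 𝒦 ∧ M ⊆ J ∧ M.Nonempty}) ⟨{i}, h𝒦.2.1 i, Set.singleton_subset_iff.2 hi,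
      Set.singleton_nonempty i⟩
  have hJM : (J \ M).Nonempty :=
    Set.sdiff_nonempty.2 fun h => hJ𝒦 (Set.Subset.antisymm h hMJ ▸ hM𝒦)
  obtain ⟨K, hK𝒦, hKJ, hKM, ⟨j, hjK, -, hjM⟩⟩ :=
    hJ M (J \ M) ⟨hMne, hJM, Set.disjoint_sdiff_right, Set.union_sdiff_cancel hMJ⟩
  rw [Set.union_sdiff_cancel hMJ] at hKJ
  have hMK : M ∪ K ∈ 𝒦 := h𝒦.2.2 M K hM𝒦 hK𝒦 (Set.inter_comm K M ▸ hKM)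
  have hsub : M ∪ K ⊆ M := hmax ⟨hMK, Set.union_subset hMJ hKJ, hMne.mono Set.subset_union_left⟩
    Set.subset_union_left
  exact hjM (hsub (Set.subset_union_right hjK))

open Classical in
lemma card_filter_forall_mem_apply {ι β : Type*} [Fintype ι] [DecidableEq ι] [Fintype β]
    (J : Set ι) (p : ι → β → Prop) :
    #{v : ι → β | ∀ j ∈ J, p j (v j)} = ∏ j, if j ∈ J then #{z | p j z} else Fintype.card β := by
  have : ({v : ι → β | ∀ j ∈ J, p j (v j)} : Finset (ι → β)) =
      Fintype.piFinset fun j => if j ∈ J then ({z | p j z} : Finset β) else univ := by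
    ext v
    simp only [Finset.mem_filter, Finset.mem_univ, true_and, Fintype.mem_piFinset]
    refine forall_congr' fun j => ?_
    split_ifs with hj <;> simp [hj]
  rw [this, Fintype.card_piFinset]
  exact Finset.prod_congr rfl fun j _ => by split_ifs <;> rfl

section ZeroSumProj

variable [DecidableEq I] (K : Finset I) (k₀ : I)

def zeroSumProj (v : I → ZMod 2) (i : I) : ZMod 2 :=
  if i ∈ K then v i + (Pi.single k₀ (∑ j ∈ K, v j) : I → ZMod 2) i else 0

def zeroSumShift (k : I) (v : I → ZMod 2) : I → ZMod 2 :=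
  v + Pi.single k (∑ j ∈ K, v j) + Pi.single k₀ (∑ j ∈ K, v j)

variable {K k₀} {k : I}

lemma zeroSumProj_of_notMem (v : I → ZMod 2) {i : I} (hi : i ∉ K) :
    zeroSumProj K k₀ v i = 0 :=
  if_neg hi

lemma zeroSumProj_of_ne (v : I → ZMod 2) {i : I} (hi : i ≠ k₀) :
    zeroSumProj K k₀ v i = if i ∈ K then v i else 0 := by
  simp [zeroSumProj, hi]

lemma sum_zeroSumProj (hk₀ : k₀ ∈ K) (v : I → ZMod 2) : ∑ j ∈ K, zeroSumProj K k₀ v j = 0 := by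
  simp only [zeroSumProj]
  rw [Finset.sum_ite_of_true fun j hj => hj, Finset.sum_add_distrib, Finset.sum_pi_single',
    if_pos hk₀, CharTwo.add_self_eq_zero]

lemma zeroSumProj_eq_self {v : I → ZMod 2} (hv : ∀ i ∉ K, v i = 0) (hs : ∑ j ∈ K, v j = 0) :
    zeroSumProj K k₀ v = v := by
  ext i
  by_cases hi : i ∈ K
  · simp [zeroSumProj, hi, hs]
  · rw [zeroSumProj_of_notMem v hi, hv i hi]

lemma sum_zeroSumShift (hk : k ∈ K) (hk₀ : k₀ ∈ K) (v : I → ZMod 2) :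
    ∑ j ∈ K, zeroSumShift K k₀ k v j = ∑ j ∈ K, v j := by
  simp only [zeroSumShift, Pi.add_apply, Finset.sum_add_distrib, Finset.sum_pi_single', if_pos hk,
    if_pos hk₀, add_assoc, CharTwo.add_self_eq_zero, add_zero]

lemma zeroSumShift_involutive (hk : k ∈ K) (hk₀ : k₀ ∈ K) :
    Function.Involutive (zeroSumShift K k₀ k) := fun v => by
  nth_rewrite 1 [zeroSumShift]
  rw [sum_zeroSumShift hk hk₀]
  ext i
  simp only [zeroSumShift, Pi.add_apply]
  grind

lemma zeroSumProj_zeroSumShift (hk : k ∈ K) (hk₀ : k₀ ∈ K) (v : I → ZMod 2) :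
    zeroSumProj K k₀ (zeroSumShift K k₀ k v) = zeroSumProj K k v := by
  ext i
  simp only [zeroSumProj, sum_zeroSumShift hk hk₀]
  split_ifs
  · simp only [zeroSumShift, Pi.add_apply]
    grind
  · rfl

end ZeroSumProj

namespace RandomFamily

section Respects

variable (φ : RandomFamily I) {J1 J2 : Set I}

lemma prob_univ : φ.prob Set.univ = 1 := by
  simp [prob, φ.P_total]

lemma prob_empty : φ.prob ∅ = 0 := by
  simp [prob]

lemma respects_comm : φ.Respects J1 J2 ↔ φ.Respects J2 J1 := by
  simp only [Respects, Set.union_comm J1 J2, mul_comm (φ.probEq J1 _)]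

lemma respects_of_const_right (c : ∀ i, φ.R i) (hc : ∀ ω, ∀ j ∈ J2, φ.X j ω = c j) :
    φ.Respects J1 J2 := by
  intro x
  have hunion : ∀ ω, (∀ j ∈ J1 ∪ J2, φ.X j ω = x j) ↔
      (∀ j ∈ J1, φ.X j ω = x j) ∧ ∀ j ∈ J2, φ.X j ω = x j := fun ω => by
    simp only [Set.mem_union, or_imp, forall_and]
  by_cases hx : ∀ j ∈ J2, x j = c j
  · have h2 : {ω | ∀ j ∈ J2, φ.X j ω = x j} = Set.univ :=
      Set.eq_univ_of_forall fun ω j hj => (hc ω j hj).trans (hx j hj).symm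
    have h12 : {ω | ∀ j ∈ J1 ∪ J2, φ.X j ω = x j} = {ω | ∀ j ∈ J1, φ.X j ω = x j} := by
      ext ω
      simp only [Set.mem_ofPred_eq, hunion, and_iff_left_iff_imp]
      exact fun _ j hj => (hc ω j hj).trans (hx j hj).symm
    rw [probEq, probEq, probEq, h2, h12, prob_univ, mul_one]
  · have h2 : {ω | ∀ j ∈ J2, φ.X j ω = x j} = ∅ :=
      Set.eq_empty_of_forall_notMem fun ω hω =>
        hx fun j hj => (hω j hj).symm.trans (hc ω j hj)
    have h12 : {ω | ∀ j ∈ J1 ∪ J2, φ.X j ω = x j} = ∅ := by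
      ext ω
      simp only [Set.mem_ofPred_eq, hunion, Set.mem_empty_iff_false, iff_false, not_and]
      exact fun _ hω => hx fun j hj => (hω j hj).symm.trans (hc ω j hj)
    rw [probEq, probEq, probEq, h2, h12, prob_empty, mul_zero]

end Respects

section Inflate

variable (φ : RandomFamily I)

lemma card_Ω_pos : 0 < Fintype.card φ.Ω :=
  Finset.card_pos.2 (Finset.nonempty_of_sum_ne_zero (φ.P_total.trans_ne one_ne_zero))

noncomputable def inflate (n : ℕ) : RandomFamily I where
  Ω := φ.Ω × Fin (n + 1)
  P p := φ.P p.1 / (n + 1)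
  P_nonneg p := div_nonneg (φ.P_nonneg _) (by positivity)
  P_total := by
    simp only [Fintype.sum_prod_type, Finset.sum_const, Finset.card_univ, Fintype.card_fin,
      nsmul_eq_mul, Nat.cast_add, Nat.cast_one]
    simp_rw [mul_div_cancel₀ _ (Nat.cast_add_one_ne_zero n : (n : ℝ) + 1 ≠ 0)]
    exact φ.P_total
  R := φ.R
  X i p := φ.X i p.1

lemma probEq_inflate (n : ℕ) (J : Set I) (x : ∀ i, φ.R i) :
    (φ.inflate n).probEq J x = φ.probEq J x := by
  change ∑ p : φ.Ω × Fin (n + 1), Set.indicator {p | ∀ j ∈ J, φ.X j p.1 = x j}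
    (fun p => φ.P p.1 / (n + 1)) p = ∑ ω, Set.indicator {ω | ∀ j ∈ J, φ.X j ω = x j} φ.P ω
  rw [Fintype.sum_prod_type]
  refine Finset.sum_congr rfl fun ω _ => ?_
  by_cases h : ∀ j ∈ J, φ.X j ω = x j
  · rw [Set.indicator_of_mem (show ω ∈ {ω | ∀ j ∈ J, φ.X j ω = x j} from h)]
    rw [Finset.sum_congr rfl fun y _ => Set.indicator_of_mem
      (show (ω, y) ∈ {p : φ.Ω × Fin (n + 1) | ∀ j ∈ J, φ.X j p.1 = x j} from h) _]
    simp only [Finset.sum_const, Finset.card_univ, Fintype.card_fin, nsmul_eq_mul, Nat.cast_add,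
      Nat.cast_one]
    exact mul_div_cancel₀ _ (Nat.cast_add_one_ne_zero n : (n : ℝ) + 1 ≠ 0)
  · simp [h]

lemma Kconn_inflate (n : ℕ) : (φ.inflate n).Kconn = φ.Kconn := by
  have h : ∀ J1 J2, (φ.inflate n).Respects J1 J2 ↔ φ.Respects J1 J2 := fun J1 J2 =>
    forall_congr' fun (x : ∀ i, φ.R i) => by rw [probEq_inflate, probEq_inflate, probEq_inflate]
  exact Set.ext fun J => forall₂_congr fun J1 J2 => imp_congr_right fun _ => not_congr (h J1 J2)

lemma inflate_injective : Function.Injective φ.inflate := fun n m h => by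
  have := congrArg (fun ψ : RandomFamily I => Fintype.card ψ.Ω) h
  change Fintype.card (φ.Ω × Fin (n + 1)) = Fintype.card (φ.Ω × Fin (m + 1)) at this
  simp only [Fintype.card_prod, Fintype.card_fin] at this
  have := Nat.eq_of_mul_eq_mul_left φ.card_Ω_pos this
  omega

end Inflate

section Tensor

variable {B : Type} [Fintype B] [DecidableEq B] (ψ : B → RandomFamily I)

noncomputable def bigTensor : RandomFamily I where
  Ω := ∀ b, (ψ b).Ω
  P ω := ∏ b, (ψ b).P (ω b)
  P_nonneg ω := Finset.prod_nonneg fun b _ => (ψ b).P_nonneg _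
  P_total := by
    rw [← Fintype.prod_sum fun b (w : (ψ b).Ω) => (ψ b).P w]
    exact Finset.prod_eq_one fun b _ => (ψ b).P_total
  R i := ∀ b, (ψ b).R i
  X i ω b := (ψ b).X i (ω b)

lemma probEq_bigTensor (J : Set I) (x : ∀ i, (bigTensor ψ).R i) :
    (bigTensor ψ).probEq J x = ∏ b, (ψ b).probEq J fun i => x i b := by
  classical
  simp only [probEq, prob, Set.indicator_apply, Set.mem_ofPred_eq, bigTensor]
  rw [Fintype.prod_sum fun b (w : (ψ b).Ω) =>
    if ∀ j ∈ J, (ψ b).X j w = x j b then (ψ b).P w else 0]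
  refine Finset.sum_congr rfl fun ω _ => ?_
  have hcond : (∀ j ∈ J, (fun b => (ψ b).X j (ω b)) = x j) ↔
      ∀ b, ∀ j ∈ J, (ψ b).X j (ω b) = x j b :=
    ⟨fun h b j hj => congrFun (h j hj) b, fun h j hj => funext fun b => h b j hj⟩
  rw [if_congr hcond rfl rfl, Fintype.prod_ite_zero]

lemma bigTensor_respects {J1 J2 : Set I} (h : ∀ b, (ψ b).Respects J1 J2) :
    (bigTensor ψ).Respects J1 J2 := fun x => by
  simp only [probEq_bigTensor, ← Finset.prod_mul_distrib]
  exact Finset.prod_congr rfl fun b _ => h b _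

lemma bigTensor_not_respects {J1 J2 : Set I} (y : ∀ b i, (ψ b).R i) (b₀ : B)
    (h₀ : (ψ b₀).probEq (J1 ∪ J2) (y b₀) = 0)
    (hpos : ∀ b, 0 < (ψ b).probEq J1 (y b) ∧ 0 < (ψ b).probEq J2 (y b)) :
    ¬ (bigTensor ψ).Respects J1 J2 := fun h => by
  let x : ∀ i, (bigTensor ψ).R i := fun i b => y b i
  have := h x
  rw [probEq_bigTensor ψ _ x, probEq_bigTensor ψ J1 x, probEq_bigTensor ψ J2 x,
    Finset.prod_eq_zero (Finset.mem_univ b₀) h₀] at this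
  exact (mul_pos (Finset.prod_pos fun b _ => (hpos b).1)
    (Finset.prod_pos fun b _ => (hpos b).2)).ne this

end Tensor

section Bits

/-- The sample space must live in `Type`, hence the bits are indexed by `Fin (card ι)`. -/
noncomputable def ofBits (ι : Type*) [Fintype ι] (F : (ι → ZMod 2) → I → ZMod 2) :
    RandomFamily I where
  Ω := Fin (Fintype.card ι) → ZMod 2
  P _ := ((2 : ℝ) ^ Fintype.card ι)⁻¹
  P_nonneg _ := by positivity
  P_total := by simp
  R _ := ZMod 2
  X i ω := F (ω ∘ Fintype.equivFin ι) i

variable {ι : Type*} [Fintype ι]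

open Classical in
lemma probEq_ofBits (F : (ι → ZMod 2) → I → ZMod 2) (J : Set I) (x : I → ZMod 2) :
    (ofBits ι F).probEq J x = #{v | ∀ j ∈ J, F v j = x j} / 2 ^ Fintype.card ι := by
  let e : (Fin (Fintype.card ι) → ZMod 2) ≃ (ι → ZMod 2) :=
    Equiv.arrowCongr (Fintype.equivFin ι).symm (Equiv.refl _)
  change ∑ ω, Set.indicator {ω | ∀ j ∈ J, F (e ω) j = x j}
    (fun _ => ((2 : ℝ) ^ Fintype.card ι)⁻¹) ω = _
  simp only [Set.indicator_apply, Set.mem_ofPred_eq]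
  rw [Fintype.sum_equiv e _ (fun v => if ∀ j ∈ J, F v j = x j then _ else 0) fun _ => rfl,
    ← Finset.sum_filter, Finset.sum_const, nsmul_eq_mul, div_eq_mul_inv]

lemma ofBits_probEq_congr {F G : (ι → ZMod 2) → I → ZMod 2} {J : Set I}
    (h : ∀ v, ∀ j ∈ J, F v j = G v j) (x : I → ZMod 2) :
    (ofBits ι F).probEq J x = (ofBits ι G).probEq J x := by
  classical
  simp only [probEq_ofBits]
  congr 3
  exact Finset.filter_congr fun v _ => forall₂_congr fun j hj => by rw [h v j hj]

lemma ofBits_probEq_comp_equiv (F : (ι → ZMod 2) → I → ZMod 2) (e : (ι → ZMod 2) ≃ (ι → ZMod 2))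
    (J : Set I) (x : I → ZMod 2) :
    (ofBits ι (F ∘ e)).probEq J x = (ofBits ι F).probEq J x := by
  classical
  simp only [probEq_ofBits]
  congr 2
  exact Finset.card_equiv e fun v => by simp

lemma ofBits_probEq_pos {F : (ι → ZMod 2) → I → ZMod 2} {J : Set I} {x : I → ZMod 2}
    (v : ι → ZMod 2) (hv : ∀ j ∈ J, F v j = x j) : 0 < (ofBits ι F).probEq J x := by
  classical
  rw [probEq_ofBits]
  exact div_pos (Nat.cast_pos.2 (Finset.card_pos.2 ⟨v, by simpa using hv⟩)) (by positivity)

lemma ofBits_probEq_eq_zero {F : (ι → ZMod 2) → I → ZMod 2} {J : Set I} {x : I → ZMod 2}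
    (h : ∀ v, ¬ ∀ j ∈ J, F v j = x j) : (ofBits ι F).probEq J x = 0 := by
  classical
  rw [probEq_ofBits, Finset.filter_false_of_mem fun v _ => h v, Finset.card_empty,
    Nat.cast_zero, zero_div]

lemma probEq_ofBits_coordinatewise [Fintype I] [DecidableEq I] (f : I → ZMod 2 → ZMod 2)
    (J : Set I) [DecidablePred (· ∈ J)] (x : I → ZMod 2) :
    (ofBits I fun v i => f i (v i)).probEq J x =
      (∏ j, if j ∈ J then #{z | f j z = x j} else 2 : ℕ) / 2 ^ Fintype.card I := by
  classical
  rw [probEq_ofBits]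
  congr 2
  convert card_filter_forall_mem_apply J (fun j z => f j z = x j)
  exact (ZMod.card 2).symm

lemma ofBits_coordinatewise_respects [Fintype I] [DecidableEq I]
    (f : I → ZMod 2 → ZMod 2) {J1 J2 : Set I} (hd : Disjoint J1 J2) :
    (ofBits I fun v i => f i (v i)).Respects J1 J2 := by
  classical
  intro (x : I → ZMod 2)
  rw [probEq_ofBits_coordinatewise, probEq_ofBits_coordinatewise, probEq_ofBits_coordinatewise]
  have key : (∏ j, if j ∈ J1 ∪ J2 then #{z | f j z = x j} else 2) * 2 ^ Fintype.card I =
      (∏ j, if j ∈ J1 then #{z | f j z = x j} else 2) *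
        ∏ j, if j ∈ J2 then #{z | f j z = x j} else 2 := by
    rw [← Finset.card_univ, ← Finset.prod_const, ← Finset.prod_mul_distrib,
      ← Finset.prod_mul_distrib]
    refine Finset.prod_congr rfl fun j _ => ?_
    by_cases h1 : j ∈ J1
    · simp [h1, Set.disjoint_left.1 hd h1, mul_comm]
    · by_cases h2 : j ∈ J2 <;> simp [h1, h2, mul_comm]
  have key' := congrArg (Nat.cast : ℕ → ℝ) key
  simp only [Nat.cast_mul, Nat.cast_pow, Nat.cast_ofNat] at key'
  rw [div_mul_div_comm, div_eq_div_iff (by positivity) (by positivity)]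
  linear_combination (2 : ℝ) ^ Fintype.card I * key'

end Bits

section ZeroSum

variable [Fintype I] [DecidableEq I] {K : Finset I} {k₀ k : I} {J J1 J2 : Set I}

/-- Uniform bits on `K` conditioned to sum to zero, and `0` off `K`: the law of the
`K`-brunnian family. -/
noncomputable def zeroSum (K : Finset I) (k₀ : I) : RandomFamily I :=
  ofBits I (zeroSumProj K k₀)

lemma zeroSum_probEq_eq_zeroSum (hk : k ∈ K) (hk₀ : k₀ ∈ K) (x : I → ZMod 2) :
    (zeroSum K k₀).probEq J x = (zeroSum K k).probEq J x := by
  have : zeroSumProj K k = zeroSumProj K k₀ ∘ (zeroSumShift_involutive hk hk₀).toPerm :=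
    funext fun v => (zeroSumProj_zeroSumShift hk hk₀ v).symm
  change (ofBits I (zeroSumProj K k₀)).probEq J x = (ofBits I (zeroSumProj K k)).probEq J x
  rw [this, ofBits_probEq_comp_equiv]

lemma zeroSum_probEq_eq_coordinatewise (hk : k ∈ K) (hk₀ : k₀ ∈ K) (hkJ : k ∉ J)
    (x : I → ZMod 2) :
    (zeroSum K k₀).probEq J x = (ofBits I fun v i => if i ∈ K then v i else 0).probEq J x := by
  rw [zeroSum_probEq_eq_zeroSum hk hk₀]
  exact ofBits_probEq_congr (fun v j hj => zeroSumProj_of_ne v (ne_of_mem_of_not_mem hj hkJ)) x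

lemma zeroSum_respects (hk₀ : k₀ ∈ K) (hd : Disjoint J1 J2) (hK : ¬ Contests (K : Set I) J1 J2) :
    (zeroSum K k₀).Respects J1 J2 := by
  simp only [Contests, not_and_or, Set.not_nonempty_iff_eq_empty] at hK
  rcases hK with hK | hK | hK
  · obtain ⟨k, hkK, hk⟩ := Set.not_subset.1 hK
    have hcw : ∀ J ⊆ J1 ∪ J2, ∀ x : I → ZMod 2, (zeroSum K k₀).probEq J x =
        (ofBits I fun v i => if i ∈ K then v i else 0).probEq J x := fun J hJ =>
      zeroSum_probEq_eq_coordinatewise hkK hk₀ fun h => hk (hJ h)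
    intro (x : I → ZMod 2)
    rw [hcw _ subset_rfl, hcw _ Set.subset_union_left, hcw _ Set.subset_union_right]
    exact ofBits_coordinatewise_respects (fun i z => if i ∈ K then z else 0) hd x
  · refine (respects_comm _).1 (respects_of_const_right _ (fun _ => (0 : ZMod 2)) fun ω j hj => ?_)
    exact zeroSumProj_of_notMem _ fun h => (Set.eq_empty_iff_forall_notMem.1 hK) j ⟨h, hj⟩
  · refine respects_of_const_right _ (fun _ => (0 : ZMod 2)) fun ω j hj => ?_
    exact zeroSumProj_of_notMem _ fun h => (Set.eq_empty_iff_forall_notMem.1 hK) j ⟨h, hj⟩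

lemma zeroSum_probEq_eq_zero (hk₀ : k₀ ∈ K) (hKJ : (K : Set I) ⊆ J) {x : I → ZMod 2}
    (hx : ∑ j ∈ K, x j ≠ 0) : (zeroSum K k₀).probEq J x = 0 :=
  ofBits_probEq_eq_zero fun v hv => hx <| by
    rw [← sum_zeroSumProj hk₀ v]
    exact Finset.sum_congr rfl fun j hj => (hv j (hKJ hj)).symm

lemma zeroSum_probEq_pos {v x : I → ZMod 2} (hv : ∀ i ∉ K, v i = 0) (hs : ∑ j ∈ K, v j = 0)
    (h : ∀ j ∈ J, v j = x j) : 0 < (zeroSum K k₀).probEq J x :=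
  ofBits_probEq_pos v (by rwa [zeroSumProj_eq_self hv hs])

lemma zeroSum_probEq_zero_pos : 0 < (zeroSum K k₀).probEq J (0 : I → ZMod 2) :=
  zeroSum_probEq_pos (fun _ _ => rfl) Finset.sum_const_zero fun _ _ => rfl

lemma zeroSum_probEq_pos_of_notMem (hk : k ∈ K) (hkJ : k ∉ J) {x : I → ZMod 2}
    (hx : ∀ i ∉ K, x i = 0) : 0 < (zeroSum K k₀).probEq J x :=
  zeroSum_probEq_pos (v := zeroSumProj K k x) (fun _ => zeroSumProj_of_notMem x)
    (sum_zeroSumProj hk x) fun j hj => by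
      rw [zeroSumProj_of_ne x (ne_of_mem_of_not_mem hj hkJ)]
      split_ifs with hjK
      · rfl
      · exact (hx j hjK).symm

lemma zeroSum_single_witness {j₁ j₂ : I} (hd : Disjoint J1 J2) (hj₁ : j₁ ∈ J1) (hj₂ : j₂ ∈ J2)
    (hK : (K : Set I) = J1 ∪ J2) (hk₀ : k₀ ∈ K) :
    (zeroSum K k₀).probEq (J1 ∪ J2) (Pi.single j₁ 1 : I → ZMod 2) = 0 ∧
      0 < (zeroSum K k₀).probEq J1 (Pi.single j₁ 1 : I → ZMod 2) ∧
      0 < (zeroSum K k₀).probEq J2 (Pi.single j₁ 1 : I → ZMod 2) := by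
  have hj₁K : j₁ ∈ K := by rw [← Finset.mem_coe, hK]; exact Or.inl hj₁
  have hj₂K : j₂ ∈ K := by rw [← Finset.mem_coe, hK]; exact Or.inr hj₂
  have hx : ∀ i ∉ K, (Pi.single j₁ 1 : I → ZMod 2) i = 0 := fun i hi =>
    Pi.single_eq_of_ne (ne_of_mem_of_not_mem hj₁K hi).symm _
  refine ⟨zeroSum_probEq_eq_zero hk₀ hK.le ?_,
    zeroSum_probEq_pos_of_notMem hj₂K (Set.disjoint_right.1 hd hj₂) hx,
    zeroSum_probEq_pos_of_notMem hj₁K (Set.disjoint_left.1 hd hj₁) hx⟩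
  simp [hj₁K]

end ZeroSum

section ZeroSumTensor

variable [Fintype I] [DecidableEq I] {𝒦 : Set (Set I)} {J J1 J2 : Set I}

/-- One factor for every `K ∈ 𝒦` and every choice of the correcting coordinate `k₀ ∈ K`; the
redundant copies are harmless and spare us choosing `k₀`. -/
noncomputable def connPairs (𝒦 : Set (Set I)) : Finset (Finset I × I) :=
  open Classical in {p | (p.1 : Set I) ∈ 𝒦 ∧ p.2 ∈ p.1}

noncomputable def zeroSumTensor (𝒦 : Set (Set I)) : RandomFamily I :=
  bigTensor fun b : Fin (connPairs 𝒦).card =>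
    zeroSum ((connPairs 𝒦).equivFin.symm b).1.1 ((connPairs 𝒦).equivFin.symm b).1.2

lemma zeroSumTensor_respects (hd : Disjoint J1 J2) (h : ∀ K ∈ 𝒦, ¬ Contests K J1 J2) :
    (zeroSumTensor 𝒦).Respects J1 J2 :=
  bigTensor_respects _ fun b => by
    classical
    obtain ⟨hK, hk⟩ := (Finset.mem_filter.1 ((connPairs 𝒦).equivFin.symm b).2).2
    exact zeroSum_respects hk hd (h _ hK)

lemma zeroSumTensor_not_respects (hJ : J ∈ 𝒦) (hdis : IsDissociation J J1 J2) :
    ¬ (zeroSumTensor 𝒦).Respects J1 J2 := by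
  classical
  obtain ⟨⟨j₁, hj₁⟩, ⟨j₂, hj₂⟩, hd, rfl⟩ := hdis
  set K := (J1 ∪ J2).toFinset
  have hK : (K : Set I) = J1 ∪ J2 := Set.coe_toFinset _
  have hj₁K : j₁ ∈ K := by simp [K, hj₁]
  have hmem : (K, j₁) ∈ connPairs 𝒦 := Finset.mem_filter.2 ⟨Finset.mem_univ _, hK ▸ hJ, hj₁K⟩
  set b₀ := (connPairs 𝒦).equivFin ⟨(K, j₁), hmem⟩
  have hwit : ∀ p : Finset I × I, p = (K, j₁) →
      (zeroSum p.1 p.2).probEq (J1 ∪ J2) (Pi.single j₁ 1 : I → ZMod 2) = 0 ∧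
        0 < (zeroSum p.1 p.2).probEq J1 (Pi.single j₁ 1 : I → ZMod 2) ∧
        0 < (zeroSum p.1 p.2).probEq J2 (Pi.single j₁ 1 : I → ZMod 2) := by
    rintro _ rfl
    exact zeroSum_single_witness hd hj₁ hj₂ hK hj₁K
  obtain ⟨h₀, h₁, h₂⟩ := hwit ((connPairs 𝒦).equivFin.symm b₀) (by simp [b₀])
  refine bigTensor_not_respects _
    (fun b => if b = b₀ then Pi.single j₁ 1 else 0 : Fin _ → I → ZMod 2) b₀ (by simpa using h₀)
    fun b => ?_
  by_cases hb : b = b₀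
  · subst hb
    simpa using ⟨h₁, h₂⟩
  · simp only [hb, if_false]
    exact ⟨zeroSum_probEq_zero_pos, zeroSum_probEq_zero_pos⟩

lemma Kconn_zeroSumTensor_subset_gamma : (zeroSumTensor 𝒦).Kconn ⊆ Gamma 𝒦 :=
  fun _ hJ J1 J2 hdis => by
    by_contra! h
    exact hJ J1 J2 hdis (zeroSumTensor_respects hdis.2.2.1 h)

lemma Kconn_zeroSumTensor (h𝒦 : IsConnectivity 𝒦) : (zeroSumTensor 𝒦).Kconn = 𝒦 :=
  (Kconn_zeroSumTensor_subset_gamma.trans h𝒦.gamma_subset).antisymm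
    fun _ hJ _ _ hdis => zeroSumTensor_not_respects hJ hdis

end ZeroSumTensor

end RandomFamily

theorem stmt19_general {I : Type u} [Fintype I] (𝒦 : Set (Set I))
    (h𝒦 : IsConnectivity 𝒦) :
    {φ : RandomFamily I | φ.Kconn = 𝒦}.Infinite := by
  classical
  refine Set.infinite_of_injective_forall_mem
    (RandomFamily.zeroSumTensor 𝒦).inflate_injective fun n => ?_
  rw [Set.mem_ofPred_eq, RandomFamily.Kconn_inflate, RandomFamily.Kconn_zeroSumTensor h𝒦]

/-- for every integral connectivity structure `𝒦` on a finite nonempty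
set `I`, there are infinitely many pairwise distinct random families `φ` on `I` with
`K_φ = 𝒦`. -/
theorem stmt19 {I : Type u} [Fintype I] [Nonempty I] (𝒦 : Set (Set I))
    (h𝒦 : IsConnectivity 𝒦) :
    {φ : RandomFamily I | φ.Kconn = 𝒦}.Infinite :=
  stmt19_general 𝒦 h𝒦
end
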